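/- Consider the block matrix M = [[A, D], [-Dᵀ, -K]] with A ∈ ℝ^{n×n}, D ∈ ℝ^{n×k}, and K ∈ ℝ^{k×k} symmetric positive definite. If the Schur complement A - D K⁻¹ Dᵀ (equivalently A + D(-K)⁻¹(-Dᵀ) appropriately signed) is Hurwitz and additionally A = J - R with J skew-symmetric, R positive semidefinite, then M is Hurwitz. -/

import Mathlib

/-!
Let `v = (x, y)` be an eigenvector of `M = [[A, D], [-Dᵀ, -K]]` for `μ`. The coupling blocks
cancel in `Re (v* M v)`, so `Re μ · |v|² = Re (x* A x) - Re (y* K y) ≤ -Re (y* K y)`, using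
`Re (x* A x) = -Re (x* R x) ≤ 0` for `A = J - R`. If `Re μ ≥ 0`, positive definiteness of `K`
forces `y = 0`; the eigen-equations then read `A x = μ x` and `Dᵀ x = 0`, so `μ` is an eigenvalue
of the Schur complement `A - D K⁻¹ Dᵀ`, contradicting its Hurwitz property.
-/

open Matrix

/-- A real square matrix is Hurwitz if all of its complex eigenvalues have
negative real part. -/
def IsHurwitz {n : Type*} [Fintype n] [DecidableEq n]
    (A : Matrix n n ℝ) : Prop :=
  ∀ μ ∈ spectrum ℂ (A.map Complex.ofReal), μ.re < 0

open scoped ComplexOrder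

namespace Matrix

variable {m p : Type*}

theorem map_nonsing_inv [Fintype m] [DecidableEq m] {K L : Type*} [Field K] [Field L]
    (f : K →+* L) (A : Matrix m m K) : A⁻¹.map f = (A.map f)⁻¹ := by
  have hadj := f.map_adjugate A
  have hdet := f.map_det A
  simp only [RingHom.mapMatrix_apply] at hadj hdet
  rw [inv_def, inv_def, ← hadj, ← hdet]
  ext i j
  simp [Ring.inverse_eq_inv']

theorem mem_spectrum_iff_exists_mulVec_eq_smul [Fintype m] [DecidableEq m] {K : Type*} [Field K]
    {A : Matrix m m K} {μ : K} : μ ∈ spectrum K A ↔ ∃ v ≠ 0, A *ᵥ v = μ • v := by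
  simp only [← spectrum_toLin', ← Module.End.hasEigenvalue_iff_mem_spectrum,
    Module.End.hasEigenvalue_iff, Submodule.ne_bot_iff, Module.End.mem_eigenspace_iff,
    toLin'_apply]
  exact ⟨fun ⟨v, hv, h0⟩ => ⟨v, h0, hv⟩, fun ⟨v, h0, hv⟩ => ⟨v, hv, h0⟩⟩

section RCLike

variable [Fintype m] [Fintype p] {𝕜 : Type*} [RCLike 𝕜]

theorem star_star_dotProduct_mulVec (B : Matrix m p 𝕜) (x : m → 𝕜) (y : p → 𝕜) :
    star (star x ⬝ᵥ B *ᵥ y) = star y ⬝ᵥ Bᴴ *ᵥ x := by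
  rw [star_dotProduct, star_star, star_mulVec, dotProduct_mulVec]

theorem re_star_dotProduct_mulVec_eq_zero {S : Matrix m m 𝕜} (hS : Sᴴ = -S) (x : m → 𝕜) :
    RCLike.re (star x ⬝ᵥ S *ᵥ x) = 0 := by
  have hconj : star (star x ⬝ᵥ S *ᵥ x) = -(star x ⬝ᵥ S *ᵥ x) := by
    rw [star_star_dotProduct_mulVec, hS, neg_mulVec, dotProduct_neg]
  have hre := congrArg RCLike.re hconj
  rw [RCLike.star_def, RCLike.conj_re, map_neg] at hre
  linarith

theorem re_star_dotProduct_sub_mulVec_nonpos {J R : Matrix m m 𝕜} (hJ : Jᴴ = -J)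
    (hR : R.PosSemidef) (x : m → 𝕜) : RCLike.re (star x ⬝ᵥ (J - R) *ᵥ x) ≤ 0 := by
  rw [sub_mulVec, dotProduct_sub, map_sub, re_star_dotProduct_mulVec_eq_zero hJ]
  linarith [hR.re_dotProduct_nonneg x]

theorem re_star_dotProduct_fromBlocks_mulVec (A : Matrix m m 𝕜) (D : Matrix m p 𝕜)
    (C : Matrix p p 𝕜) (x : m → 𝕜) (y : p → 𝕜) :
    RCLike.re (star (Sum.elim x y) ⬝ᵥ fromBlocks A D (-Dᴴ) C *ᵥ Sum.elim x y) =
      RCLike.re (star x ⬝ᵥ A *ᵥ x) + RCLike.re (star y ⬝ᵥ C *ᵥ y) := by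
  have hcross : RCLike.re (star y ⬝ᵥ Dᴴ *ᵥ x) = RCLike.re (star x ⬝ᵥ D *ᵥ y) := by
    rw [← star_star_dotProduct_mulVec, RCLike.star_def, RCLike.conj_re]
  have hstar : star (Sum.elim x y) = Sum.elim (star x) (star y) := by
    ext (i | i) <;> rfl
  rw [fromBlocks_mulVec, hstar, sumElim_dotProduct_sumElim, Sum.elim_comp_inl, Sum.elim_comp_inr,
    neg_mulVec, dotProduct_add, dotProduct_add, dotProduct_neg]
  simp only [map_add, map_neg, hcross]
  ring

theorem re_mul_star_dotProduct_self_nonneg {μ : 𝕜} (hμ : 0 ≤ RCLike.re μ) (v : m → 𝕜) :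
    0 ≤ RCLike.re (μ * (star v ⬝ᵥ v)) := by
  obtain ⟨hre, him⟩ := RCLike.nonneg_iff.mp (dotProduct_star_self_nonneg v)
  rw [RCLike.mul_re, him, mul_zero, sub_zero]
  exact mul_nonneg hμ hre

theorem mem_spectrum_sub_mul_mul_of_mem_spectrum_fromBlocks [DecidableEq m] [DecidableEq p]
    {A : Matrix m m 𝕜} {D : Matrix m p 𝕜} {K : Matrix p p 𝕜}
    (hA : ∀ x, RCLike.re (star x ⬝ᵥ A *ᵥ x) ≤ 0) (hK : K.PosDef) {μ : 𝕜}
    (hμ : μ ∈ spectrum 𝕜 (fromBlocks A D (-Dᴴ) (-K))) (hμre : 0 ≤ RCLike.re μ) :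
    μ ∈ spectrum 𝕜 (A - D * K⁻¹ * Dᴴ) := by
  obtain ⟨v, hv, hMv⟩ := mem_spectrum_iff_exists_mulVec_eq_smul.mp hμ
  obtain ⟨x, y, rfl⟩ : ∃ x y, v = Sum.elim x y := ⟨_, _, (Sum.elim_comp_inl_inr v).symm⟩
  have hrow₁ : A *ᵥ x + D *ᵥ y = μ • x := by
    funext i
    simpa [fromBlocks_mulVec] using congrFun hMv (Sum.inl i)
  have hrow₂ : -Dᴴ *ᵥ x + -K *ᵥ y = μ • y := by
    funext i
    simpa [fromBlocks_mulVec] using congrFun hMv (Sum.inr i)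
  have hy : y = 0 := by
    by_contra hy
    have hquad := re_star_dotProduct_fromBlocks_mulVec A D (-K) x y
    rw [hMv, dotProduct_smul, smul_eq_mul, neg_mulVec, dotProduct_neg, map_neg] at hquad
    linarith [re_mul_star_dotProduct_self_nonneg hμre (Sum.elim x y), hA x,
      hK.re_dotProduct_pos hy]
  have hx : x ≠ 0 := by
    rintro rfl
    exact hv (by rw [hy]; ext (i | i) <;> rfl)
  have hDx : Dᴴ *ᵥ x = 0 := by simpa [hy, neg_mulVec] using hrow₂
  refine mem_spectrum_iff_exists_mulVec_eq_smul.mpr ⟨x, hx, ?_⟩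
  rw [sub_mulVec, ← mulVec_mulVec, hDx, mulVec_zero, sub_zero, ← hrow₁, hy, mulVec_zero, add_zero]

end RCLike

theorem conjTranspose_map_ofReal (B : Matrix m p ℝ) :
    (B.map Complex.ofReal)ᴴ = Bᵀ.map Complex.ofReal := by
  ext i j
  simp

theorem map_ofReal_mul [Fintype p] {q : Type*} (M : Matrix m p ℝ) (N : Matrix p q ℝ) :
    (M * N).map Complex.ofReal = M.map Complex.ofReal * N.map Complex.ofReal :=
  Matrix.map_mul (f := Complex.ofRealHom)

variable [Fintype m] [DecidableEq m]

theorem PosSemidef.map_ofReal {Q : Matrix m m ℝ} (hQ : Q.PosSemidef) :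
    (Q.map Complex.ofReal).PosSemidef := by
  obtain ⟨B, rfl⟩ : ∃ B : Matrix m m ℝ, Q = Bᴴ * B := by
    open scoped MatrixOrder in exact CStarAlgebra.nonneg_iff_eq_star_mul_self.mp hQ.nonneg
  rw [map_ofReal_mul, conjTranspose_eq_transpose_of_trivial, ← conjTranspose_map_ofReal]
  exact posSemidef_conjTranspose_mul_self _

theorem PosDef.map_ofReal {Q : Matrix m m ℝ} (hQ : Q.PosDef) :
    (Q.map Complex.ofReal).PosDef := by
  refine hQ.posSemidef.map_ofReal.posDef_iff_det_ne_zero.mpr ?_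
  have hdet : (Q.map Complex.ofReal).det = (Q.det : ℂ) := (Complex.ofRealHom.map_det Q).symm
  rw [hdet]
  exact Complex.ofReal_ne_zero.mpr hQ.det_pos.ne'

end Matrix

theorem block_matrix_hurwitz {n k : ℕ}
    (A J R : Matrix (Fin n) (Fin n) ℝ) (D : Matrix (Fin n) (Fin k) ℝ)
    (K : Matrix (Fin k) (Fin k) ℝ)
    (hK : K.PosDef)
    (hSchur : IsHurwitz (A - D * K⁻¹ * Dᵀ))
    (hA : A = J - R) (hJ : Jᵀ = -J) (hR : R.PosSemidef) :
    IsHurwitz (Matrix.fromBlocks A D (-Dᵀ) (-K)) := by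
  intro μ hμ
  by_contra! hμre
  have hblocks : (fromBlocks A D (-Dᵀ) (-K)).map Complex.ofReal =
      fromBlocks (A.map Complex.ofReal) (D.map Complex.ofReal) (-(D.map Complex.ofReal)ᴴ)
        (-K.map Complex.ofReal) := by
    rw [fromBlocks_map, Matrix.map_neg _ Complex.ofReal_neg, Matrix.map_neg _ Complex.ofReal_neg,
      conjTranspose_map_ofReal]
  have hschur : (A - D * K⁻¹ * Dᵀ).map Complex.ofReal = A.map Complex.ofReal -
      D.map Complex.ofReal * (K.map Complex.ofReal)⁻¹ * (D.map Complex.ofReal)ᴴ := by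
    have hinv : K⁻¹.map Complex.ofReal = (K.map Complex.ofReal)⁻¹ :=
      map_nonsing_inv Complex.ofRealHom K
    rw [Matrix.map_sub _ Complex.ofReal_sub, map_ofReal_mul, map_ofReal_mul, hinv,
      conjTranspose_map_ofReal]
  have hdissipative : ∀ x, RCLike.re (star x ⬝ᵥ A.map Complex.ofReal *ᵥ x) ≤ 0 := by
    have hJ' : (J.map Complex.ofReal)ᴴ = -J.map Complex.ofReal := by
      rw [conjTranspose_map_ofReal, hJ, Matrix.map_neg _ Complex.ofReal_neg]
    rw [hA, Matrix.map_sub _ Complex.ofReal_sub]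
    exact re_star_dotProduct_sub_mulVec_nonpos hJ' hR.map_ofReal
  rw [hblocks] at hμ
  exact (hSchur μ (hschur ▸ mem_spectrum_sub_mul_mul_of_mem_spectrum_fromBlocks hdissipative
    hK.map_ofReal hμ hμre)).not_ge hμre
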